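/- arXiv:0710.2884 — 4 statements merged into one kernel-verified Lean document; each statement's English description precedes it below -/
import Mathlib

section
/- Every indivisible metric space has bounded distance set: if X is a nonempty metric space such that for every partition of X into two pieces some piece contains an isometric copy of X, then sup{d(x,y) : x,y ∈ X} < ∞. -/
/-- Every indivisible metric space (for 2-partitions) has bounded distance set. -/
theorem indivisible_implies_bounded {X : Type*} [MetricSpace X] [Nonempty X]
    (h : ∀ A : Set X,
      (∃ e : X → X, Isometry e ∧ Set.range e ⊆ A) ∨
      (∃ e : X → X, Isometry e ∧ Set.range e ⊆ Aᶜ)) :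
    ∃ B : ℝ, ∀ x y : X, dist x y ≤ B := by
  by_contra hB
  push_neg at hB
  obtain ⟨x0⟩ := ‹Nonempty X›
  -- f z = dist z x0 is unbounded
  have hf : ∀ B : ℝ, ∃ z : X, B < dist z x0 := by
    intro B
    obtain ⟨x, y, hxy⟩ := hB (2 * B)
    rcases le_or_gt (dist x x0) B with h1 | h1
    · refine ⟨y, ?_⟩
      have := dist_triangle x x0 y
      have h2 : dist x0 y = dist y x0 := dist_comm _ _
      linarith [dist_triangle x x0 y]
    · exact ⟨x, h1⟩
  -- build a sequence with fast-growing distances to x0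
  let z : ℕ → X := fun n => Nat.rec x0
    (fun n zn => Classical.choose (hf (dist zn x0 + 2 * n + 4))) n
  set t : ℕ → ℝ := fun n => dist (z n) x0 with ht
  have hgap : ∀ n : ℕ, t n + 2 * n + 4 < t (n + 1) := fun n =>
    Classical.choose_spec (hf (dist (z n) x0 + 2 * n + 4))
  have hmono : StrictMono t := strictMono_nat_of_lt_succ (fun n => by
    have := hgap n
    have : (0:ℝ) ≤ 2 * n := by positivity
    linarith [hgap n])
  have hkey : ∀ m n : ℕ, m < n → t m + m + n + 2 < t n := by
    intro m n hmn
    obtain ⟨k, rfl⟩ : ∃ k, n = k + 1 := ⟨n - 1, by omega⟩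
    have hmk : m ≤ k := by omega
    have h1 : t m ≤ t k := hmono.monotone hmk
    have h2 := hgap k
    have h3 : (m : ℝ) ≤ k := by exact_mod_cast hmk
    push_cast
    linarith
  -- the partition
  set A : Set X := {x | ∃ n : ℕ, Even n ∧ |dist x x0 - t n| ≤ n} with hA
  -- key: image of z m under an isometric copy lands near t m
  have hloc : ∀ (e : X → X), Isometry e → ∀ m : ℕ,
      |dist (e (z m)) x0 - t m| ≤ dist (e x0) x0 := by
    intro e he m
    have hd : dist (e (z m)) (e x0) = t m := he.dist_eq (z m) x0
    have h1 := dist_triangle (e (z m)) (e x0) x0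
    have h2 := dist_triangle (e (z m)) x0 (e x0)
    rw [abs_le]
    constructor
    · have := dist_comm x0 (e x0)
      linarith [dist_triangle (e (z m)) x0 (e x0), dist_comm x0 (e x0)]
    · linarith
  rcases h A with ⟨e, he, hrange⟩ | ⟨e, he, hrange⟩
  · -- copy inside A : take m odd large
    set c : ℝ := dist (e x0) x0 with hc
    set m : ℕ := 2 * ⌈c⌉₊ + 1 with hm
    have hcm : c ≤ m := by
      have h1 : c ≤ (⌈c⌉₊ : ℝ) := Nat.le_ceil c
      have h2 : (⌈c⌉₊ : ℝ) ≤ m := by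
        rw [hm]; push_cast; linarith [Nat.cast_nonneg (α := ℝ) ⌈c⌉₊]
      linarith
    obtain ⟨n, hn, hnear⟩ := hrange (Set.mem_range_self (z m))
    have hmn : m ≠ n := by
      rintro rfl
      exact (Nat.not_odd_iff_even.mpr hn) (by simp [hm, parity_simps])
    have h1 := hloc e he m
    -- |t m - t n| ≤ n + c
    have h2 : |t m - t n| ≤ n + c := by
      have := abs_sub_le (t m) (dist (e (z m)) x0) (t n)
      rw [abs_sub_comm (t m) (dist (e (z m)) x0)] at this
      linarith [abs_sub_le (t m) (dist (e (z m)) x0) (t n)]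
    rcases lt_or_gt_of_ne hmn with hlt | hlt
    · have := hkey m n hlt
      have habs : t n - t m ≤ n + c := by
        have := abs_le.mp h2; linarith [(abs_le.mp h2).1]
      linarith
    · have := hkey n m hlt
      have habs : t m - t n ≤ n + c := (abs_le.mp h2).2
      have hnm : (n : ℝ) ≤ m := by exact_mod_cast hlt.le
      linarith
  · -- copy inside Aᶜ : take m even large
    set c : ℝ := dist (e x0) x0 with hc
    set m : ℕ := 2 * ⌈c⌉₊ with hm
    have hcm : c ≤ m := by
      have h1 : c ≤ (⌈c⌉₊ : ℝ) := Nat.le_ceil c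
      have h2 : (⌈c⌉₊ : ℝ) ≤ m := by
        rw [hm]; push_cast; linarith [Nat.cast_nonneg (α := ℝ) ⌈c⌉₊]
      linarith
    have h1 := hloc e he m
    have : e (z m) ∈ A := ⟨m, ⟨⌈c⌉₊, by omega⟩, le_trans h1 hcm⟩
    exact hrange (Set.mem_range_self (z m)) this
end

section
/- Conversely to the extension property: if a countable metric space X has the property that for every finite subspace F ⊆ X and every Katětov map f over F with F ∪ {f} embeddable into X there exists a point of X realizing f over F, then X is ultrahomogeneous (every isometry between finite subspaces extends to a surjective self-isometry of X). -/
section Aux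

variable {X : Type*} [MetricSpace X]

open scoped Classical

/-- A finite partial isometry, coded as a finite set of pairs. -/
def IsPI (p : Finset (X × X)) : Prop :=
  ∀ q ∈ p, ∀ r ∈ p, dist q.1 r.1 = dist q.2 r.2

lemma IsPI.swap {p : Finset (X × X)} (h : IsPI p) : IsPI (p.image Prod.swap) := by
  intro q hq r hr
  simp only [Finset.mem_image] at hq hr
  obtain ⟨q', hq', rfl⟩ := hq
  obtain ⟨r', hr', rfl⟩ := hr
  simpa [Prod.swap] using (h q' hq' r' hr').symm

variable (hext : ∀ (F : Finset X) (f : X → ℝ),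
      (∀ x ∈ F, 0 < f x) →
      (∀ x ∈ F, ∀ y ∈ F, |f x - f y| ≤ dist x y ∧ dist x y ≤ f x + f y) →
      (∃ (g : X → X) (z : X),
        (∀ x ∈ F, ∀ y ∈ F, dist (g x) (g y) = dist x y) ∧
        (∀ x ∈ F, dist z (g x) = f x)) →
      ∃ y : X, ∀ x ∈ F, dist y x = f x)

include hext

lemma extend_fwd {p : Finset (X × X)} (hp : IsPI p) (x : X) :
    ∃ y, IsPI (insert (x, y) p) := by
  classical
  by_cases hx : ∃ q ∈ p, q.1 = x
  · obtain ⟨q, hq, hq1⟩ := hx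
    have hmem : (x, q.2) ∈ p := by
      have : (x, q.2) = q := by rw [← hq1]
      rw [this]; exact hq
    exact ⟨q.2, by rw [Finset.insert_eq_self.mpr hmem]; exact hp⟩
  · push_neg at hx
    set inv : X → X := fun b => if h : ∃ a, (a, b) ∈ p then h.choose else b with hinv
    have key : ∀ a b, (a, b) ∈ p → inv b = a := by
      intro a b hab
      have hex : ∃ a', (a', b) ∈ p := ⟨a, hab⟩
      have hc := hex.choose_spec
      have hd : dist hex.choose a = dist b b := hp _ hc _ hab
      simp only [dist_self] at hd
      have : hex.choose = a := by rwa [dist_eq_zero] at hd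
      simp only [hinv, dif_pos hex, this]
    set F := p.image Prod.snd with hF
    have hmemF : ∀ b ∈ F, ∃ a, (a, b) ∈ p := by
      intro b hb
      simp only [hF, Finset.mem_image] at hb
      obtain ⟨q, hq, rfl⟩ := hb
      exact ⟨q.1, hq⟩
    obtain ⟨y, hy⟩ := hext F (fun b => dist x (inv b))
      (by
        intro b hb
        obtain ⟨a, hab⟩ := hmemF b hb
        rw [key a b hab]
        exact dist_pos.mpr fun h => hx (a, b) hab h.symm)
      (by
        intro b hb b' hb'
        obtain ⟨a, hab⟩ := hmemF b hb
        obtain ⟨a', hab'⟩ := hmemF b' hb'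
        rw [key a b hab, key a' b' hab']
        have hd : dist a a' = dist b b' := hp _ hab _ hab'
        constructor
        · rw [← hd, dist_comm x a, dist_comm x a']
          exact abs_dist_sub_le a a' x
        · rw [← hd, dist_comm x a]
          exact dist_triangle a x a')
      (by
        refine ⟨inv, x, ?_, fun b _ => rfl⟩
        intro b hb b' hb'
        obtain ⟨a, hab⟩ := hmemF b hb
        obtain ⟨a', hab'⟩ := hmemF b' hb'
        rw [key a b hab, key a' b' hab']
        exact hp _ hab _ hab')
    refine ⟨y, ?_⟩
    intro q hq r hr
    rcases Finset.mem_insert.mp hq with hq1 | hq2 <;>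
      rcases Finset.mem_insert.mp hr with hr1 | hr2
    · rw [hq1, hr1]; simp
    · subst hq1
      have hr2' : r.2 ∈ F := Finset.mem_image_of_mem Prod.snd hr2
      have := hy r.2 hr2'
      have hk : inv r.2 = r.1 := key r.1 r.2 hr2
      simp only [hk] at this
      simpa [dist_comm] using this.symm
    · subst hr1
      have hq2' : q.2 ∈ F := Finset.mem_image_of_mem Prod.snd hq2
      have := hy q.2 hq2'
      have hk : inv q.2 = q.1 := key q.1 q.2 hq2
      simp only [hk] at this
      simpa [dist_comm] using this.symm
    · exact hp _ hq2 _ hr2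

lemma extend_bwd {p : Finset (X × X)} (hp : IsPI p) (y : X) :
    ∃ x, IsPI (insert (x, y) p) := by
  classical
  obtain ⟨z, hz⟩ := extend_fwd hext hp.swap y
  refine ⟨z, ?_⟩
  have h2 := hz.swap
  have himg : (insert (y, z) (p.image Prod.swap)).image Prod.swap = insert (z, y) p := by
    rw [Finset.image_insert, Finset.image_image]
    simp [Function.comp_def]
  rwa [himg] at h2

lemma pi_step {p : Finset (X × X)} (hp : IsPI p) (v : X) :
    ∃ q, IsPI q ∧ p ⊆ q ∧ (∃ y, (v, y) ∈ q) ∧ (∃ x, (x, v) ∈ q) := by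
  obtain ⟨y, hy⟩ := extend_fwd hext hp v
  obtain ⟨x, hx⟩ := extend_bwd hext hy v
  refine ⟨insert (x, v) (insert (v, y) p), hx, ?_, ⟨y, ?_⟩, ⟨x, ?_⟩⟩
  · exact (Finset.subset_insert _ _).trans (Finset.subset_insert _ _)
  · exact Finset.mem_insert_of_mem (Finset.mem_insert_self _ _)
  · exact Finset.mem_insert_self _ _

end Aux

/-- Converse of the extension property: if a countable metric space `X` is such that
every Katětov map over a finite subspace whose one-point extension embeds into `X`
is realized in `X`, then `X` is ultrahomogeneous. -/
theorem extension_property_implies_ultrahomogeneous {X : Type*} [MetricSpace X]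
    [Countable X]
    (hext : ∀ (F : Finset X) (f : X → ℝ),
      (∀ x ∈ F, 0 < f x) →
      (∀ x ∈ F, ∀ y ∈ F, |f x - f y| ≤ dist x y ∧ dist x y ≤ f x + f y) →
      (∃ (g : X → X) (z : X),
        (∀ x ∈ F, ∀ y ∈ F, dist (g x) (g y) = dist x y) ∧
        (∀ x ∈ F, dist z (g x) = f x)) →
      ∃ y : X, ∀ x ∈ F, dist y x = f x) :
    ∀ (F : Finset X) (φ : X → X),
      (∀ x ∈ F, ∀ y ∈ F, dist (φ x) (φ y) = dist x y) →
      ∃ ψ : X ≃ᵢ X, ∀ x ∈ F, ψ x = φ x := by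
  classical
  intro F φ hφ
  rcases isEmpty_or_nonempty X with hX | hX
  · exact ⟨IsometryEquiv.refl X, fun x _ => (hX.false x).elim⟩
  obtain ⟨e, he⟩ := exists_surjective_nat X
  -- initial partial isometry
  set p0 : Finset (X × X) := F.image (fun x => (x, φ x)) with hp0def
  have hp0 : IsPI p0 := by
    intro q hq r hr
    simp only [hp0def, Finset.mem_image] at hq hr
    obtain ⟨a, ha, rfl⟩ := hq
    obtain ⟨b, hb, rfl⟩ := hr
    exact (hφ a ha b hb).symm
  -- the recursive sequence of partial isometries
  have hstep := fun (p : Finset (X × X)) (hp : IsPI p) (v : X) => pi_step hext hp v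
  choose Q hQ1 hQ2 hQ3 hQ4 using hstep
  let P : ℕ → {p : Finset (X × X) // IsPI p} := fun n =>
    Nat.rec ⟨p0, hp0⟩ (fun n ih => ⟨Q ih.1 ih.2 (e n), hQ1 ih.1 ih.2 (e n)⟩) n
  have hPsucc : ∀ n, (P (n + 1)).1 = Q (P n).1 (P n).2 (e n) := fun n => rfl
  have hmono : ∀ m n, m ≤ n → (P m).1 ⊆ (P n).1 := by
    intro m n hmn
    induction n with
    | zero => rw [Nat.le_zero.mp hmn]
    | succ n ih =>
      rcases Nat.lt_or_ge m (n + 1) with h | h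
      · exact (ih (Nat.lt_succ_iff.mp h)).trans
          (by rw [hPsucc]; exact hQ2 (P n).1 (P n).2 (e n))
      · rw [Nat.le_antisymm hmn h]
  -- the map
  have hdom : ∀ x : X, ∃ n y, (x, y) ∈ (P n).1 := by
    intro x
    obtain ⟨n, rfl⟩ := he x
    obtain ⟨y, hy⟩ := hQ3 (P n).1 (P n).2 (e n)
    exact ⟨n + 1, y, by rw [hPsucc]; exact hy⟩
  choose N Y hNY using hdom
  have hun : ∀ x y n, (x, y) ∈ (P n).1 → Y x = y := by
    intro x y n hxy
    have h1 : (x, Y x) ∈ (P (max (N x) n)).1 :=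
      hmono _ _ (le_max_left _ _) (hNY x)
    have h2 : (x, y) ∈ (P (max (N x) n)).1 := hmono _ _ (le_max_right _ _) hxy
    have := (P (max (N x) n)).2 _ h1 _ h2
    simp only [dist_self] at this
    exact dist_eq_zero.mp this.symm
  have key : ∀ x x', dist (Y x) (Y x') = dist x x' := by
    intro x x'
    have h1 : (x, Y x) ∈ (P (max (N x) (N x'))).1 :=
      hmono _ _ (le_max_left _ _) (hNY x)
    have h2 : (x', Y x') ∈ (P (max (N x) (N x'))).1 :=
      hmono _ _ (le_max_right _ _) (hNY x')
    exact ((P (max (N x) (N x'))).2 _ h1 _ h2).symm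
  have hinj : Function.Injective Y := by
    intro x x' h
    have := key x x'
    rw [h, dist_self] at this
    exact dist_eq_zero.mp this.symm
  have hsurj : Function.Surjective Y := by
    intro y
    obtain ⟨n, rfl⟩ := he y
    obtain ⟨x, hx⟩ := hQ4 (P n).1 (P n).2 (e n)
    exact ⟨x, hun x (e n) (n + 1) (by rw [hPsucc]; exact hx)⟩
  refine ⟨⟨Equiv.ofBijective Y ⟨hinj, hsurj⟩, Isometry.of_dist_eq key⟩, ?_⟩
  intro x hx
  have : (x, φ x) ∈ (P 0).1 := Finset.mem_image_of_mem _ hx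
  exact hun x (φ x) 0 this
end

section
/- In the partial order P of pairs s = (f_s, C_s), if Γ ⊆ U_p is not large relative to s, then there exists t ≤₀ s such that the complement U_p \ Γ is large relative to t. -/
/-!
Induction on `min f_s`. If `Γ` is not large relative to `s`, some `t ≤₀ s` witnesses this.
When `min f_s = 1`, the orbit of `t` meets `Γ` in a finite set; since orbits are infinite, every
smaller orbit then meets `Γᶜ` in an infinite set. Otherwise no `u ≤₁ t` makes `Γ` large, so for
each `v ≤₀ t` the induction hypothesis, applied to some `u ≤₁ v`, gives `u' ≤₀ u` with `Γᶜ`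
large relative to `u'`.

Both facts about `U_p` used here, that orbits are infinite and that every `s` has some
`t ≤ₖ s`, come from realizing Katětov maps: extend the map to all of `U_p` with values in
`{1, …, p}`, adjoin a point realizing it, embed the result by universality and move it back by
ultrahomogeneity. Realizing the extension on `dom f ∪ S` avoids any finite set `S`.
-/

/-- An element of the partial order `P`: a pair `(f, C)` where `C` is an isometric
copy of the whole space `X` (playing the role of `U_p`), and `f` is a Katětov map
with finite nonempty domain contained in `C` and values in `{1,…,p}`. -/
structure UPair (X : Type*) [MetricSpace X] (p : ℕ) where
  C : Set X
  copy : ∃ e : X → X, Isometry e ∧ Set.range e = C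
  dom : Finset X
  domNE : dom.Nonempty
  domSub : ↑dom ⊆ C
  f : X → ℕ
  frange : ∀ x ∈ dom, 1 ≤ f x ∧ f x ≤ p
  fkat : ∀ x ∈ dom, ∀ y ∈ dom,
    |(f x : ℝ) - (f y : ℝ)| ≤ dist x y ∧ dist x y ≤ (f x : ℝ) + (f y : ℝ)

/-- `min f_s`. -/
def UPair.minf {X : Type*} [MetricSpace X] {p : ℕ} (s : UPair X p) : ℕ :=
  s.dom.inf' s.domNE s.f

/-- `t ≤ s` in `P`. -/
def UPair.le {X : Type*} [MetricSpace X] {p : ℕ} (t s : UPair X p) : Prop :=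
  ↑s.dom ⊆ (↑t.dom : Set X) ∧ t.C ⊆ s.C ∧ ∀ x ∈ s.dom, t.f x = s.f x

/-- `t ≤ₖ s`:  `t ≤ s` and `min f_t = min f_s - k` if `min f_s > k`, else `min f_t = 1`. -/
def UPair.leK {X : Type*} [MetricSpace X] {p : ℕ} (k : ℕ) (t s : UPair X p) : Prop :=
  t.le s ∧ t.minf = (if k < s.minf then s.minf - k else 1)

/-- The orbit `O(f_s, C_s)`: points of `C_s` realizing `f_s` over `dom f_s`. -/
def UPair.orbit {X : Type*} [MetricSpace X] {p : ℕ} (s : UPair X p) : Set X :=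
  {y ∈ s.C | ∀ x ∈ s.dom, dist y x = (s.f x : ℝ)}

/-- Auxiliary recursive definition of largeness, stratified by `min f_s - 1`. -/
def LargeN {X : Type*} [MetricSpace X] {p : ℕ} (Γ : Set X) :
    ℕ → UPair X p → Prop
  | 0, s => ∀ t, UPair.leK 0 t s → (t.orbit ∩ Γ).Infinite
  | n + 1, s => ∀ t, UPair.leK 0 t s → ∃ u, UPair.leK 1 u t ∧ LargeN Γ n u

/-- `Γ` is large relative to `s`. -/
def Large {X : Type*} [MetricSpace X] {p : ℕ} (Γ : Set X) (s : UPair X p) : Prop :=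
  LargeN Γ (s.minf - 1) s

open Set Function

section Katetov
variable {X : Type*} [MetricSpace X]

def IsKatetovOn (f : X → ℝ) (D : Set X) : Prop :=
  ∀ x ∈ D, ∀ y ∈ D, |f x - f y| ≤ dist x y ∧ dist x y ≤ f x + f y

lemma IsKatetovOn.nonneg {f : X → ℝ} {D : Set X} (hf : IsKatetovOn f D) {x : X} (hx : x ∈ D) :
    0 ≤ f x := by
  have := (hf x hx x hx).2
  rw [dist_self] at this
  linarith

lemma IsKatetovOn.congr {f g : X → ℝ} {D : Set X} (hf : IsKatetovOn f D) (hfg : EqOn f g D) :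
    IsKatetovOn g D := by
  intro x hx y hy
  rw [← hfg hx, ← hfg hy]
  exact hf x hx y hy

lemma IsKatetovOn.insert {f : X → ℝ} {D : Set X} (hf : IsKatetovOn f D) {z : X} (hz₀ : 0 ≤ f z)
    (hz : ∀ x ∈ D, |f z - f x| ≤ dist z x ∧ dist z x ≤ f z + f x) :
    IsKatetovOn f (insert z D) := by
  rintro x (rfl | hx) y (rfl | hy)
  · simp only [sub_self, abs_zero, dist_self, le_refl, true_and]
    linarith
  · exact hz y hy
  · rw [abs_sub_comm, dist_comm, add_comm]
    exact hz x hx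
  · exact hf x hx y hy

noncomputable def katetovDist (f : X → ℝ) : Option X → Option X → ℝ
  | some a, some b => dist a b
  | some a, none => f a
  | none, some b => f b
  | none, none => 0

noncomputable abbrev katetovExtension (f : X → ℝ) (hf : IsKatetovOn f univ) (hpos : ∀ x, 0 < f x) :
    MetricSpace (Option X) where
  dist := katetovDist f
  dist_self := by rintro (_ | a) <;> simp [katetovDist]
  dist_comm := by rintro (_ | a) (_ | b) <;> simp [katetovDist, dist_comm]
  dist_triangle := by
    have hlip : ∀ a b, f a ≤ f b + dist a b := fun a b => by
      linarith [(abs_sub_le_iff.1 (hf a trivial b trivial).1).1]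
    rintro (_ | a) (_ | b) (_ | c) <;> simp only [katetovDist]
    · simp
    · linarith [hpos c]
    · linarith [hpos b]
    · linarith [hlip c b, dist_comm b c]
    · simp
    · exact (hf a trivial c trivial).2
    · linarith [hlip a b]
    · exact dist_triangle a b c
  eq_of_dist_eq_zero := by
    rintro (_ | a) (_ | b) h <;> simp only [katetovDist] at h
    · rfl
    · linarith [hpos b]
    · linarith [hpos a]
    · rw [dist_eq_zero.1 h]

/-- The largest Katětov extension of `f|D` bounded by `c`. -/
noncomputable def cappedKatetovExt (c : ℝ) (D : Finset X) (hD : D.Nonempty) (f : X → ℝ) (y : X) :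
    ℝ :=
  min c (D.inf' hD fun x => f x + dist y x)

variable {c : ℝ} {D : Finset X} (hD : D.Nonempty) {f : X → ℝ}

variable (c f) in
lemma cappedKatetovExt_eq_or (y : X) :
    cappedKatetovExt c D hD f y = c ∨ ∃ x ∈ D, cappedKatetovExt c D hD f y = f x + dist y x := by
  obtain ⟨x, hx, hmin⟩ := D.exists_mem_eq_inf' hD fun x => f x + dist y x
  rcases min_choice c (D.inf' hD fun x => f x + dist y x) with h | h
  · exact .inl h
  · exact .inr ⟨x, hx, h.trans hmin⟩

lemma cappedKatetovExt_eq (hf : IsKatetovOn f D) (hfc : ∀ x ∈ D, f x ≤ c) {x : X} (hx : x ∈ D) :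
    cappedKatetovExt c D hD f x = f x := by
  have hinf : (D.inf' hD fun x' => f x' + dist x x') = f x := by
    refine le_antisymm ((D.inf'_le _ hx).trans_eq (by simp)) (D.le_inf' hD _ fun x' hx' => ?_)
    linarith [(abs_sub_le_iff.1 (hf x hx x' hx').1).1]
  rw [cappedKatetovExt, hinf, min_eq_right (hfc x hx)]

variable (c f) in
lemma cappedKatetovExt_le_add_dist (y y' : X) :
    cappedKatetovExt c D hD f y ≤ cappedKatetovExt c D hD f y' + dist y y' := by
  have hT : (D.inf' hD fun x => f x + dist y x) ≤
      (D.inf' hD fun x => f x + dist y' x) + dist y y' := by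
    rw [← sub_le_iff_le_add]
    refine D.le_inf' hD _ fun x hx => sub_le_iff_le_add.2 ?_
    linarith [D.inf'_le (fun x => f x + dist y x) hx, dist_triangle y y' x]
  unfold cappedKatetovExt
  rcases min_cases c (D.inf' hD fun x => f x + dist y' x) with ⟨h, -⟩ | ⟨h, -⟩ <;> rw [h]
  · linarith [min_le_left c (D.inf' hD fun x => f x + dist y x), dist_nonneg (x := y) (y := y')]
  · linarith [min_le_right c (D.inf' hD fun x => f x + dist y x)]

lemma isKatetovOn_cappedKatetovExt (hc : ∀ x y : X, dist x y ≤ c) (hf : IsKatetovOn f D) :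
    IsKatetovOn (cappedKatetovExt c D hD f) univ := by
  intro y _ y' _
  refine ⟨abs_sub_le_iff.2 ⟨?_, ?_⟩, ?_⟩
  · linarith [cappedKatetovExt_le_add_dist c hD f y y']
  · linarith [cappedKatetovExt_le_add_dist c hD f y' y, dist_comm y y']
  have hc₀ : 0 ≤ c := (dist_nonneg.trans (hc y y))
  have hnonneg : ∀ z, 0 ≤ cappedKatetovExt c D hD f z := fun z => by
    rcases cappedKatetovExt_eq_or c hD f z with h | ⟨x, hx, h⟩ <;> rw [h]
    exacts [hc₀, add_nonneg (hf.nonneg hx) dist_nonneg]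
  rcases cappedKatetovExt_eq_or c hD f y with h | ⟨x, hx, h⟩
  · linarith [hc y y', hnonneg y']
  rcases cappedKatetovExt_eq_or c hD f y' with h' | ⟨x', hx', h'⟩
  · linarith [hc y y', hnonneg y]
  rw [h, h']
  calc dist y y' ≤ dist y x + dist x x' + dist x' y' := dist_triangle4 y x x' y'
    _ ≤ f x + dist y x + (f x' + dist y' x') := by
      linarith [(hf x hx x' hx').2, dist_comm x' y']

end Katetov

section Urysohn
variable {p : ℕ}

def HasDistancesInIcc (p : ℕ) (Y : Type*) [MetricSpace Y] : Prop :=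
  ∀ x y : Y, x ≠ y → ∃ k : ℕ, 1 ≤ k ∧ k ≤ p ∧ dist x y = k

/-- The defining properties of `U_p`, apart from countability. -/
structure IsUrysohn (p : ℕ) (X : Type) [MetricSpace X] : Prop where
  hasDistancesInIcc : HasDistancesInIcc p X
  ultrahomogeneous : ∀ (F : Finset X) (φ : X → X),
    (∀ x ∈ F, ∀ y ∈ F, dist (φ x) (φ y) = dist x y) → ∃ ψ : X ≃ᵢ X, ∀ x ∈ F, ψ x = φ x
  universal : ∀ (Y : Type) [MetricSpace Y] [Countable Y], HasDistancesInIcc p Y →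
    ∃ e : Y → X, Isometry e

variable {X : Type} [MetricSpace X]

lemma HasDistancesInIcc.exists_dist_eq (hX : HasDistancesInIcc p X) (x y : X) :
    ∃ k : ℕ, k ≤ p ∧ dist x y = k := by
  by_cases hxy : x = y
  · exact ⟨0, Nat.zero_le _, by simp [hxy]⟩
  · obtain ⟨k, -, hk, hxy⟩ := hX x y hxy
    exact ⟨k, hk, hxy⟩

lemma HasDistancesInIcc.dist_le (hX : HasDistancesInIcc p X) (x y : X) : dist x y ≤ p := by
  obtain ⟨k, hk, hxy⟩ := hX.exists_dist_eq x y
  rw [hxy]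
  exact_mod_cast hk

lemma HasDistancesInIcc.exists_cappedKatetovExt_eq {D : Finset X} (hD : D.Nonempty) {h : X → ℕ}
    (hX : HasDistancesInIcc p X) (hh : ∀ x ∈ D, 1 ≤ h x ∧ h x ≤ p) (y : X) :
    ∃ k : ℕ, 1 ≤ k ∧ k ≤ p ∧ cappedKatetovExt p D hD (fun x => (h x : ℝ)) y = k := by
  rcases cappedKatetovExt_eq_or p hD (fun x => (h x : ℝ)) y with hy | ⟨x, hx, hy⟩
  · obtain ⟨x, hx⟩ := hD
    exact ⟨p, (hh x hx).1.trans (hh x hx).2, le_rfl, hy⟩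
  · obtain ⟨m, -, hm⟩ := hX.exists_dist_eq y x
    refine ⟨h x + m, (hh x hx).1.trans (Nat.le_add_right _ _), ?_, by rw [hy, hm]; push_cast; rfl⟩
    have : (h x : ℝ) + m ≤ p := by
      rw [← hm, ← hy]
      exact min_le_left _ _
    exact_mod_cast this

lemma IsUrysohn.exists_forall_mem_dist_eq [Countable X] [Nonempty X] (hX : IsUrysohn p X)
    {f : X → ℝ} (hf : IsKatetovOn f univ) (hfp : ∀ y, ∃ k : ℕ, 1 ≤ k ∧ k ≤ p ∧ f y = k)
    (T : Finset X) :
    ∃ w, ∀ x ∈ T, dist w x = f x := by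
  classical
  have hpos : ∀ y, 0 < f y := fun y => by
    obtain ⟨k, hk, -, hy⟩ := hfp y
    rw [hy]
    exact_mod_cast hk
  let _ := katetovExtension f hf hpos
  have hY : HasDistancesInIcc p (Option X) := by
    rintro (_ | a) (_ | b) hab
    · exact absurd rfl hab
    · exact hfp b
    · exact hfp a
    · exact hX.hasDistancesInIcc a b (fun h => hab (congrArg some h))
  obtain ⟨e, he⟩ := hX.universal (Option X) hY
  set g : X → X := fun x => e (some x)
  have hg : Isometry g := he.comp (Isometry.of_dist_eq fun _ _ => rfl)
  obtain ⟨ψ, hψ⟩ := hX.ultrahomogeneous (T.image g) (invFun g) <| by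
    simp only [Finset.mem_image]
    rintro _ ⟨x, -, rfl⟩ _ ⟨y, -, rfl⟩
    rw [leftInverse_invFun hg.injective, leftInverse_invFun hg.injective, hg.dist_eq]
  refine ⟨ψ (e none), fun x hx => ?_⟩
  have hψx : ψ (g x) = x := by
    rw [hψ _ (Finset.mem_image_of_mem g hx), leftInverse_invFun hg.injective]
  calc dist (ψ (e none)) x = dist (ψ (e none)) (ψ (g x)) := by rw [hψx]
    _ = dist (e none) (g x) := ψ.dist_eq _ _
    _ = f x := he.dist_eq none (some x)

lemma IsUrysohn.infinite_setOf_forall_mem_dist_eq [Countable X] (hX : IsUrysohn p X) {D : Finset X}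
    (hD : D.Nonempty) {h : X → ℕ} (hh : ∀ x ∈ D, 1 ≤ h x ∧ h x ≤ p)
    (hkat : IsKatetovOn (fun x => (h x : ℝ)) D) :
    {w | ∀ x ∈ D, dist w x = h x}.Infinite := by
  classical
  intro hfin
  have : Nonempty X := hD.to_subtype.map Subtype.val
  set F := cappedKatetovExt p D hD fun x => (h x : ℝ)
  have hFD : ∀ x ∈ D, F x = h x := fun x hx =>
    cappedKatetovExt_eq hD hkat (fun x hx => by exact_mod_cast (hh x hx).2) hx
  have hF := hX.hasDistancesInIcc.exists_cappedKatetovExt_eq hD hh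
  obtain ⟨w, hw⟩ := hX.exists_forall_mem_dist_eq
    (isKatetovOn_cappedKatetovExt hD hX.hasDistancesInIcc.dist_le hkat) hF (D ∪ hfin.toFinset)
  have hwD : ∀ x ∈ D, dist w x = h x := fun x hx =>
    (hw x (Finset.mem_union_left _ hx)).trans (hFD x hx)
  have hww := hw w (Finset.mem_union_right _ (hfin.mem_toFinset.2 hwD))
  obtain ⟨k, hk, -, hFw⟩ := hF w
  rw [dist_self, hFw] at hww
  have : (1 : ℝ) ≤ k := by exact_mod_cast hk
  linarith

end Urysohn

namespace UPair
variable {p : ℕ} {X : Type} [MetricSpace X]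

lemma one_le_minf (s : UPair X p) : 1 ≤ s.minf :=
  s.dom.le_inf' s.domNE _ fun x hx => (s.frange x hx).1

lemma isKatetovOn (s : UPair X p) : IsKatetovOn (fun x => (s.f x : ℝ)) s.dom :=
  s.fkat

lemma minf_le {s : UPair X p} {x : X} (hx : x ∈ s.dom) : s.minf ≤ s.f x :=
  s.dom.inf'_le _ hx

lemma le.trans {a b c : UPair X p} (hab : a.le b) (hbc : b.le c) : a.le c :=
  ⟨hbc.1.trans hab.1, hab.2.1.trans hbc.2.1,
    fun x hx => (hab.2.2 x (hbc.1 hx)).trans (hbc.2.2 x hx)⟩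

lemma orbit_mono {a b : UPair X p} (h : a.le b) : a.orbit ⊆ b.orbit :=
  fun _ ⟨hyC, hy⟩ => ⟨h.2.1 hyC, fun x hx => by rw [hy x (h.1 hx), h.2.2 x hx]⟩

lemma leK.minf_eq {t s : UPair X p} (h : t.leK 0 s) : t.minf = s.minf := by
  rw [h.2, if_pos (show 0 < s.minf from s.one_le_minf), Nat.sub_zero]

lemma leK.trans_leK_zero {k : ℕ} {a b c : UPair X p} (hab : a.leK k b) (hbc : b.leK 0 c) :
    a.leK k c :=
  ⟨hab.1.trans hbc.1, by rw [hab.2, hbc.minf_eq]⟩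

lemma leK.zero_trans {k : ℕ} {a b c : UPair X p} (hab : a.leK 0 b) (hbc : b.leK k c) :
    a.leK k c :=
  ⟨hab.1.trans hbc.1, by rw [hab.minf_eq, hbc.2]⟩

lemma ne_of_mem_dom_of_mem_orbit {s : UPair X p} {x z : X} (hx : x ∈ s.dom) (hz : z ∈ s.orbit) :
    x ≠ z := by
  rintro rfl
  have := hz.2 x hx
  rw [dist_self] at this
  have : s.f x = 0 := by exact_mod_cast this.symm
  have := (s.frange x hx).1
  omega

open Classical in
noncomputable def extend (s : UPair X p) (z : X) (hz : z ∈ s.orbit) (m : ℕ) (hm₁ : 1 ≤ m)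
    (hm : m ≤ s.minf) : UPair X p where
  C := s.C
  copy := s.copy
  dom := insert z s.dom
  domNE := Finset.insert_nonempty _ _
  domSub := by
    rw [Finset.coe_insert]
    exact insert_subset hz.1 s.domSub
  f := update s.f z m
  frange x hx := by
    rcases Finset.mem_insert.1 hx with rfl | hx
    · obtain ⟨y, hy⟩ := s.domNE
      rw [update_self]
      exact ⟨hm₁, hm.trans ((minf_le hy).trans (s.frange y hy).2)⟩
    · rw [update_of_ne (ne_of_mem_dom_of_mem_orbit hx hz)]
      exact s.frange x hx
  fkat := by
    have hK : IsKatetovOn (fun x => (update s.f z m x : ℝ)) (insert z s.dom) := by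
      refine (s.isKatetovOn.congr fun x hx => ?_).insert (Nat.cast_nonneg _) fun x hx => ?_
      · simp [update_of_ne (ne_of_mem_dom_of_mem_orbit hx hz)]
      have hm₀ : (0 : ℝ) ≤ m := m.cast_nonneg
      have hmx : (m : ℝ) ≤ s.f x := by exact_mod_cast hm.trans (minf_le hx)
      simp only [update_self, update_of_ne (ne_of_mem_dom_of_mem_orbit hx hz), hz.2 x hx]
      exact ⟨abs_sub_le_iff.2 ⟨by linarith, by linarith⟩, by linarith⟩
    rw [← Finset.coe_insert] at hK
    exact hK

section extend
variable (s : UPair X p) {z : X} (hz : z ∈ s.orbit) {m : ℕ} (hm₁ : 1 ≤ m) (hm : m ≤ s.minf)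

lemma extend_le : (s.extend z hz m hm₁ hm).le s := by
  classical
  refine ⟨by simp [extend], subset_rfl, fun x hx => ?_⟩
  exact update_of_ne (ne_of_mem_dom_of_mem_orbit hx hz) _ _

lemma minf_extend : (s.extend z hz m hm₁ hm).minf = m := by
  classical
  have hfD : s.dom.inf' s.domNE (update s.f z m) = s.minf :=
    Finset.inf'_congr _ rfl fun x hx =>
      update_of_ne (ne_of_mem_dom_of_mem_orbit hx hz) _ _
  simp only [minf, extend]
  rw [Finset.inf'_insert s.domNE, update_self, hfD, min_eq_left hm]

end extend

lemma orbit_infinite [Countable X] (hX : IsUrysohn p X) (s : UPair X p) : s.orbit.Infinite := by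
  obtain ⟨e, he, hrange⟩ := s.copy
  have hdom : ∀ x ∈ s.dom, ∃ x', e x' = x := fun x hx => by
    rw [← mem_range, hrange]
    exact s.domSub hx
  set D := s.dom.preimage e he.injective.injOn
  have hD : D.Nonempty := by
    obtain ⟨x, hx⟩ := s.domNE
    obtain ⟨x', rfl⟩ := hdom x hx
    exact ⟨x', Finset.mem_preimage.2 hx⟩
  have hreal := hX.infinite_setOf_forall_mem_dist_eq hD (h := s.f ∘ e)
    (fun x hx => s.frange _ (Finset.mem_preimage.1 hx))
    (fun x hx y hy => by
      simpa only [comp_apply, he.dist_eq] using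
        s.fkat _ (Finset.mem_preimage.1 hx) _ (Finset.mem_preimage.1 hy))
  refine (hreal.image he.injective.injOn).mono ?_
  rintro _ ⟨w, hw, rfl⟩
  refine ⟨hrange ▸ mem_range_self w, fun x hx => ?_⟩
  obtain ⟨x', rfl⟩ := hdom x hx
  rw [he.dist_eq]
  exact hw x' (Finset.mem_preimage.2 hx)

lemma exists_leK [Countable X] (hX : IsUrysohn p X) (k : ℕ) (s : UPair X p) :
    ∃ t : UPair X p, t.leK k s := by
  obtain ⟨z, hz⟩ := (s.orbit_infinite hX).nonempty
  have h₁ : 1 ≤ if k < s.minf then s.minf - k else 1 := by split_ifs <;> omega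
  have hle : (if k < s.minf then s.minf - k else 1) ≤ s.minf := by
    have := s.one_le_minf
    split_ifs <;> omega
  exact ⟨s.extend z hz _ h₁ hle, s.extend_le hz h₁ hle, s.minf_extend hz h₁ hle⟩

end UPair

section Largeness
variable {p : ℕ} {X : Type} [MetricSpace X] [Countable X]

lemma IsUrysohn.exists_leK_zero_largeN_compl (hX : IsUrysohn p X) {Γ : Set X} {n : ℕ}
    {s : UPair X p} (hs : ¬ LargeN Γ n s) : ∃ t, t.leK 0 s ∧ LargeN Γᶜ n t := by
  induction n generalizing s with
  | zero =>
    obtain ⟨t, hts, hfin⟩ : ∃ t : UPair X p, t.leK 0 s ∧ (t.orbit ∩ Γ).Finite := by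
      simpa [LargeN] using hs
    refine ⟨t, hts, fun u hut => ?_⟩
    have hsub : u.orbit ∩ Γ ⊆ t.orbit ∩ Γ := inter_subset_inter_left Γ (UPair.orbit_mono hut.1)
    refine ((u.orbit_infinite hX).sdiff (hfin.subset hsub)).mono fun x hx => ?_
    exact ⟨hx.1, fun hxΓ => hx.2 ⟨hx.1, hxΓ⟩⟩
  | succ n ih =>
    obtain ⟨t, hts, ht⟩ :
        ∃ t : UPair X p, t.leK 0 s ∧ ∀ u : UPair X p, u.leK 1 t → ¬ LargeN Γ n u := by
      simpa [LargeN] using hs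
    refine ⟨t, hts, fun v hvt => ?_⟩
    obtain ⟨u, huv⟩ := v.exists_leK hX 1
    obtain ⟨u', hu'u, hu'⟩ := ih (ht u (huv.trans_leK_zero hvt))
    exact ⟨u', hu'u.zero_trans huv, hu'⟩

end Largeness

theorem not_large_implies_complement_large_general
    (p : ℕ) (X : Type) [MetricSpace X] [Countable X]
    (hdist : ∀ x y : X, x ≠ y → ∃ k : ℕ, 1 ≤ k ∧ k ≤ p ∧ dist x y = k)
    (hultra : ∀ (F : Finset X) (φ : X → X),
      (∀ x ∈ F, ∀ y ∈ F, dist (φ x) (φ y) = dist x y) →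
      ∃ ψ : X ≃ᵢ X, ∀ x ∈ F, ψ x = φ x)
    (huniv : ∀ (Y : Type) [MetricSpace Y] [Countable Y],
      (∀ x y : Y, x ≠ y → ∃ k : ℕ, 1 ≤ k ∧ k ≤ p ∧ dist x y = k) →
      ∃ e : Y → X, Isometry e)
    (Γ : Set X) (s : UPair X p) (h : ¬ Large Γ s) :
    ∃ t : UPair X p, UPair.leK 0 t s ∧ Large Γᶜ t := by
  obtain ⟨t, hts, ht⟩ := IsUrysohn.exists_leK_zero_largeN_compl ⟨hdist, hultra, huniv⟩ h
  exact ⟨t, hts, by rwa [Large, hts.minf_eq]⟩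

/-- If `Γ ⊆ U_p` is not large relative to `s ∈ P`, then there is `t ≤₀ s` such that
the complement of `Γ` is large relative to `t`. -/
theorem not_large_implies_complement_large
    (p : ℕ) (hp : 1 ≤ p) (X : Type) [MetricSpace X] [Countable X]
    (hdist : ∀ x y : X, x ≠ y → ∃ k : ℕ, 1 ≤ k ∧ k ≤ p ∧ dist x y = k)
    (hultra : ∀ (F : Finset X) (φ : X → X),
      (∀ x ∈ F, ∀ y ∈ F, dist (φ x) (φ y) = dist x y) →
      ∃ ψ : X ≃ᵢ X, ∀ x ∈ F, ψ x = φ x)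
    (huniv : ∀ (Y : Type) [MetricSpace Y] [Countable Y],
      (∀ x y : Y, x ≠ y → ∃ k : ℕ, 1 ≤ k ∧ k ≤ p ∧ dist x y = k) →
      ∃ e : Y → X, Isometry e)
    (Γ : Set X) (s : UPair X p) (h : ¬ Large Γ s) :
    ∃ t : UPair X p, UPair.leK 0 t s ∧ Large Γᶜ t :=
  not_large_implies_complement_large_general p X hdist hultra huniv Γ s h
end

section
/- Every complete separable ultrahomogeneous metric space contains a countable dense metric subspace that is itself ultrahomogeneous. -/
/-!
Fix, for every finite partial isometry of `Y`, one surjective self-isometry extending it. Starting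
from a countable dense set, close it off countably often under these isometries and their inverses,
each time only for the partial isometries supported in the set built so far. The union `D` is
countable and dense; a partial isometry between finite subsets of `D` already lives in a finite
stage, so its chosen extension maps every later stage into the next one in both directions and
therefore maps `D` onto itself.
-/

open Set

theorem Set.Countable.setOf_finset_coe_subset {α : Type*} {A : Set α} (hA : A.Countable) :
    {s : Finset α | ↑s ⊆ A}.Countable :=
  ((countable_ofPred_finite_subset hA).preimage Finset.coe_injective).mono
    fun s hs => show (s : Set α).Finite ∧ ↑s ⊆ A from ⟨s.finite_toSet, hs⟩

section EquivClosure

variable {α : Type*} (e : Finset (α × α) → α ≃ α)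

def equivClosureStep (B : Set α) : Set α :=
  B ∪ ⋃ s ∈ {s : Finset (α × α) | ↑s ⊆ B ×ˢ B}, (e s '' B ∪ (e s).symm '' B)

def equivClosure (A : Set α) : Set α :=
  ⋃ n, (equivClosureStep e)^[n] A

variable {e}

theorem subset_equivClosureStep (B : Set α) : B ⊆ equivClosureStep e B :=
  subset_union_left

theorem Set.Countable.equivClosureStep {B : Set α} (hB : B.Countable) :
    (equivClosureStep e B).Countable :=
  hB.union <| (hB.prod hB).setOf_finset_coe_subset.biUnion
    fun _ _ => (hB.image _).union (hB.image _)

theorem image_subset_equivClosureStep {B : Set α} {s : Finset (α × α)} (hs : ↑s ⊆ B ×ˢ B) :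
    e s '' B ⊆ equivClosureStep e B ∧ (e s).symm '' B ⊆ equivClosureStep e B := by
  have h : e s '' B ∪ (e s).symm '' B ⊆ equivClosureStep e B :=
    fun _ hy => Or.inr (mem_biUnion (x := s) hs hy)
  exact union_subset_iff.mp h

theorem monotone_iterate_equivClosureStep (A : Set α) :
    Monotone fun n => (equivClosureStep e)^[n] A :=
  monotone_nat_of_le_succ fun n => by
    simpa only [Function.iterate_succ_apply'] using subset_equivClosureStep _

theorem subset_equivClosure (A : Set α) : A ⊆ equivClosure e A :=
  subset_iUnion (fun n => (equivClosureStep e)^[n] A) 0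

theorem Set.Countable.equivClosure {A : Set α} (hA : A.Countable) :
    (equivClosure e A).Countable := by
  refine countable_iUnion fun n => ?_
  induction n with
  | zero => exact hA
  | succ n ih => rw [Function.iterate_succ_apply']; exact ih.equivClosureStep

theorem image_equivClosure {A : Set α} {s : Finset (α × α)}
    (hs : ↑s ⊆ equivClosure e A ×ˢ equivClosure e A) :
    e s '' equivClosure e A = equivClosure e A := by
  set E := fun n => (equivClosureStep e)^[n] A
  have hE : Monotone E := monotone_iterate_equivClosureStep A
  obtain ⟨n, hn⟩ : ∃ n, ↑s ⊆ E n ×ˢ E n := by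
    refine Directed.exists_mem_subset_of_finset_subset_biUnion ?_ ?_
    · exact Monotone.directed_le fun _ _ h => prod_mono (hE h) (hE h)
    · rwa [iUnion_prod_of_monotone hE hE]
  have step : ∀ m, n ≤ m →
      e s '' E m ⊆ E (m + 1) ∧ (e s).symm '' E m ⊆ E (m + 1) := fun m hm => by
    simpa only [E, Function.iterate_succ_apply'] using
      image_subset_equivClosureStep (hn.trans (prod_mono (hE hm) (hE hm)))
  have maps : ∀ f : α → α, (∀ m, n ≤ m → f '' E m ⊆ E (m + 1)) →
      f '' equivClosure e A ⊆ equivClosure e A := by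
    intro f hf
    rw [equivClosure, image_iUnion]
    refine iUnion_subset fun m => ?_
    calc f '' E m ⊆ f '' E (max m n) := image_mono (hE (le_max_left m n))
      _ ⊆ E (max m n + 1) := hf _ (le_max_right m n)
      _ ⊆ ⋃ k, E k := subset_iUnion E _
  refine (maps _ fun m hm => (step m hm).1).antisymm ?_
  rw [Equiv.image_eq_preimage_symm, ← image_subset_iff]
  exact maps _ fun m hm => (step m hm).2

end EquivClosure

section Ultrahomogeneous

variable {Y : Type*} [MetricSpace Y]

variable (Y) in
def IsUltrahomogeneous : Prop :=
  ∀ (F : Finset Y) (φ : Y → Y), (∀ x ∈ F, ∀ y ∈ F, dist (φ x) (φ y) = dist x y) →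
    ∃ ψ : Y ≃ᵢ Y, ∀ x ∈ F, ψ x = φ x

def IsPartialIsometryGraph (s : Finset (Y × Y)) : Prop :=
  ∀ p ∈ s, ∀ q ∈ s, dist p.2 q.2 = dist p.1 q.1

theorem IsPartialIsometryGraph.eq_of_mem {s : Finset (Y × Y)} (hs : IsPartialIsometryGraph s)
    {x b b' : Y} (hb : (x, b) ∈ s) (hb' : (x, b') ∈ s) : b = b' :=
  dist_le_zero.mp ((hs _ hb _ hb').trans (dist_self x)).le

theorem isPartialIsometryGraph_image_graph [DecidableEq Y] {F : Finset Y} {φ : Y → Y}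
    (hφ : ∀ x ∈ F, ∀ y ∈ F, dist (φ x) (φ y) = dist x y) :
    IsPartialIsometryGraph (F.image fun x => (x, φ x)) := by
  simpa only [IsPartialIsometryGraph, Finset.forall_mem_image] using hφ

theorem IsUltrahomogeneous.exists_isometryEquiv_of_graph (hY : IsUltrahomogeneous Y)
    {s : Finset (Y × Y)} (hs : IsPartialIsometryGraph s) :
    ∃ ψ : Y ≃ᵢ Y, ∀ p ∈ s, ψ p.1 = p.2 := by
  classical
  let φ : Y → Y := fun x => if h : ∃ b, (x, b) ∈ s then h.choose else x
  have hφ : ∀ p ∈ s, φ p.1 = p.2 := fun p hp => by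
    have h : ∃ b, (p.1, b) ∈ s := ⟨p.2, hp⟩
    simp only [φ, dif_pos h]
    exact hs.eq_of_mem h.choose_spec hp
  obtain ⟨ψ, hψ⟩ := hY (s.image Prod.fst) φ <| by
    simp only [Finset.forall_mem_image]
    intro p hp q hq
    rw [hφ p hp, hφ q hq]
    exact hs p hp q hq
  exact ⟨ψ, fun p hp => (hψ p.1 (Finset.mem_image_of_mem _ hp)).trans (hφ p hp)⟩

end Ultrahomogeneous

theorem exists_countable_dense_ultrahomogeneous_subspace_general
    {Y : Type*} [MetricSpace Y] [TopologicalSpace.SeparableSpace Y]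
    (hultra : ∀ (F : Finset Y) (φ : Y → Y),
      (∀ x ∈ F, ∀ y ∈ F, dist (φ x) (φ y) = dist x y) →
      ∃ ψ : Y ≃ᵢ Y, ∀ x ∈ F, ψ x = φ x) :
    ∃ D : Set Y, D.Countable ∧ Dense D ∧
      ∀ (F : Finset Y), ↑F ⊆ D →
        ∀ φ : Y → Y, (∀ x ∈ F, ∀ y ∈ F, dist (φ x) (φ y) = dist x y) →
          (∀ x ∈ F, φ x ∈ D) →
          ∃ ψ : Y → Y, (∀ a ∈ D, ∀ b ∈ D, dist (ψ a) (ψ b) = dist a b) ∧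
            ψ '' D = D ∧ ∀ x ∈ F, ψ x = φ x := by
  classical
  choose! Ψ hΨ using fun s : Finset (Y × Y) =>
    IsUltrahomogeneous.exists_isometryEquiv_of_graph hultra (s := s)
  obtain ⟨D₀, hD₀, hD₀_dense⟩ := TopologicalSpace.exists_countable_dense Y
  set D := equivClosure (fun s => (Ψ s).toEquiv) D₀
  refine ⟨D, hD₀.equivClosure, hD₀_dense.mono (subset_equivClosure D₀), ?_⟩
  intro F hFD φ hφ hφD
  set s := F.image fun x => (x, φ x)
  have hsD : ↑s ⊆ D ×ˢ D := by
    rintro _ hp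
    obtain ⟨x, hx, rfl⟩ := Finset.mem_image.mp hp
    exact ⟨hFD hx, hφD x hx⟩
  refine ⟨Ψ s, fun a _ b _ => (Ψ s).dist_eq a b, image_equivClosure hsD, fun x hx => ?_⟩
  exact hΨ s (isPartialIsometryGraph_image_graph hφ) (x, φ x) (Finset.mem_image_of_mem _ hx)

/-- Every complete separable ultrahomogeneous metric space contains a countable dense
metric subspace that is itself ultrahomogeneous. -/
theorem exists_countable_dense_ultrahomogeneous_subspace
    {Y : Type*} [MetricSpace Y] [CompleteSpace Y] [TopologicalSpace.SeparableSpace Y]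
    (hultra : ∀ (F : Finset Y) (φ : Y → Y),
      (∀ x ∈ F, ∀ y ∈ F, dist (φ x) (φ y) = dist x y) →
      ∃ ψ : Y ≃ᵢ Y, ∀ x ∈ F, ψ x = φ x) :
    ∃ D : Set Y, D.Countable ∧ Dense D ∧
      ∀ (F : Finset Y), ↑F ⊆ D →
        ∀ φ : Y → Y, (∀ x ∈ F, ∀ y ∈ F, dist (φ x) (φ y) = dist x y) →
          (∀ x ∈ F, φ x ∈ D) →
          ∃ ψ : Y → Y, (∀ a ∈ D, ∀ b ∈ D, dist (ψ a) (ψ b) = dist a b) ∧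
            ψ '' D = D ∧ ∀ x ∈ F, ψ x = φ x :=
  exists_countable_dense_ultrahomogeneous_subspace_general hultra
end
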